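/- Kesten-type bound: let X₁, X₂, … be conditionally independent random variables (given a σ-algebra G) with common subexponential distribution F satisfying Assumption D3. Then for every ε > 0 there exist constants V(ε) > 0 and x₀ = x₀(ε) such that for all x > x₀ and all n ≥ 1, P(∑_{k=1}^n X_k > x) ≤ V(ε)(1+ε)^n F̄(x). -/

import Mathlib

/-!
Kesten's argument: by induction on `n`, find `Aₙ` with `P(Sₙ > x) ≤ Aₙ F̄(x)` for all `x`.
For large `z`, the event `{Sₙ + Xₙ > z}` is covered by `{Sₙ > z - h(z)}`, `{Xₙ > z - h(z)}`,
`Bₙ(h(z))ᶜ`, and the events where `Sₙ` lies in a cell `(sⱼ, sⱼ₊₁]` of a unit-mesh grid from `h(z)`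
to `z - h(z)` while `Xₙ > z - sⱼ₊₁`. By insensitivity of `h` the first three cost
`(1 + o(1)) Aₙ F̄(z) + O(F̄(z))`. On each cell, conditional independence and D3 give
`r(z) F̄(z - sⱼ₊₁) P(Sₙ ∈ (sⱼ, sⱼ₊₁])`, and summation by parts against the induction hypothesis
bounds the sum over the cells by `Aₙ r(z) (2 ∫_{h(z)}^{z-h(z)} F̄(z - y) F(dy) + F̄(h(z)) F̄(z - h(z)))`,
which is `o(Aₙ F̄(z))`. Hence `Aₙ₊₁ ≤ (1 + ε) Aₙ + 3` beyond a threshold, and below it the trivial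
bound `P ≤ 1` suffices.
-/

open MeasureTheory ProbabilityTheory Filter Topology Set

/-- The (right) tail function of a measure on `ℝ`. -/
noncomputable def tail (μ : MeasureTheory.Measure ℝ) (x : ℝ) : ℝ := (μ (Set.Ioi x)).toReal

/-- A distribution is long-tailed if `F̄(x+y) ~ F̄(x)` for every `y`. -/
def LongTailed (μ : MeasureTheory.Measure ℝ) : Prop :=
  (∀ x : ℝ, 0 < μ (Set.Ioi x)) ∧
  ∀ y : ℝ, Filter.Tendsto (fun x => tail μ (x + y) / tail μ x) Filter.atTop (nhds 1)

/-- A distribution supported on `[0,∞)` is subexponential if `F̄^{*2}(x) ~ 2 F̄(x)`. -/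
def Subexponential (μ : MeasureTheory.Measure ℝ) : Prop :=
  (∀ x : ℝ, 0 < μ (Set.Ioi x)) ∧ μ (Set.Iio 0) = 0 ∧
  Filter.Tendsto (fun x => tail (μ.conv μ) x / tail μ x) Filter.atTop (nhds 2)

/-- Membership in the class `H(F)` of insensitivity functions of a long-tailed `F`. -/
structure MemH (μ : MeasureTheory.Measure ℝ) (h : ℝ → ℝ) : Prop where
  nonneg : ∀ x, 0 ≤ x → 0 ≤ h x
  mono : MonotoneOn h (Set.Ici 0)
  tendsto_atTop : Filter.Tendsto h Filter.atTop Filter.atTop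
  ratio_anti : AntitoneOn (fun x => h x / x) (Set.Ioi 0)
  ratio_zero : Filter.Tendsto (fun x => h x / x) Filter.atTop (nhds 0)
  tail_insensitive :
    Filter.Tendsto (fun x => tail μ (x - h x) / tail μ x) Filter.atTop (nhds 1)

/-- Assumption D3 of Foss–Richards (2010) with insensitivity function `h ∈ H(F)`:
there are a nondecreasing `r` and events `Bᵢ(x) ∈ G` increasing to `Ω` with
`P(Xᵢ > x | G) 1(Bᵢ(x)) ≤ r(x) F̄(x) 1(Bᵢ(x))` a.s., `P(Bᵢ(h(x))ᶜ) = o(F̄(x))`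
uniformly in `i`, `r(x) F̄(h(x)) = o(1)` and
`r(x) ∫_{h(x)}^{x-h(x)} F̄(x-y) F(dy) = o(F̄(x))`. -/
def AssumptionD3 {Ω : Type*} [MeasurableSpace Ω] (P : MeasureTheory.Measure Ω)
    (G : MeasurableSpace Ω) {ι : Type*} (X : ι → Ω → ℝ)
    (μ : MeasureTheory.Measure ℝ) (h : ℝ → ℝ) : Prop :=
  ∃ (r : ℝ → ℝ) (B : ι → ℝ → Set Ω),
    Monotone r ∧
    (∀ i x, MeasurableSet[G] (B i x)) ∧
    (∀ i, Monotone (B i)) ∧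
    (∀ i, (⋃ x : ℝ, B i x) = Set.univ) ∧
    (∀ i x, ∀ᵐ ω ∂P, ω ∈ B i x →
      (P[Set.indicator {ω' | x < X i ω'} (fun _ => (1 : ℝ)) | G]) ω ≤ r x * tail μ x) ∧
    (∀ ε : ℝ, 0 < ε → ∀ᶠ x in Filter.atTop, ∀ i,
      (P ((B i (h x))ᶜ)).toReal ≤ ε * tail μ x) ∧
    Filter.Tendsto (fun x => r x * tail μ (h x)) Filter.atTop (nhds 0) ∧
    Filter.Tendsto (fun x =>
        (r x * ∫ y in Set.Ioc (h x) (x - h x), tail μ (x - y) ∂μ) / tail μ x)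
      Filter.atTop (nhds 0)


section Tail

variable {μ : Measure ℝ}

lemma tail_nonneg (x : ℝ) : 0 ≤ tail μ x := ENNReal.toReal_nonneg

lemma tail_antitone [IsFiniteMeasure μ] : Antitone (tail μ) := fun _ _ hab =>
  measureReal_mono (Ioi_subset_Ioi hab)

lemma Subexponential.tail_pos [IsFiniteMeasure μ] (hS : Subexponential μ) (x : ℝ) :
    0 < tail μ x :=
  ENNReal.toReal_pos (hS.1 x).ne' (measure_ne_top μ _)

lemma measureReal_preimage_Ioc {Ω : Type*} [MeasurableSpace Ω] {P : Measure Ω}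
    [IsFiniteMeasure P] {S : Ω → ℝ} (hS : Measurable S) {a b : ℝ} (hab : a ≤ b) :
    P.real (S ⁻¹' Ioc a b) = P.real (S ⁻¹' Ioi a) - P.real (S ⁻¹' Ioi b) := by
  rw [← Ioi_sdiff_Ioi, preimage_sdiff,
    measureReal_sdiff (preimage_mono (Ioi_subset_Ioi hab)) (hS measurableSet_Ioi)]

lemma tail_sub_tail [IsFiniteMeasure μ] {a b : ℝ} (hab : a ≤ b) :
    tail μ a - tail μ b = μ.real (Ioc a b) :=
  (measureReal_preimage_Ioc measurable_id hab).symm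

end Tail

section CondIndep

variable {Ω : Type*} {G : MeasurableSpace Ω} [mΩ : MeasurableSpace Ω] {P : Measure Ω}
  [IsFiniteMeasure P]

lemma setIntegral_condExp_indicator (hG : G ≤ mΩ) {s B : Set Ω} (hs : MeasurableSet s)
    (hB : MeasurableSet[G] B) : ∫ ω in B, (P⟦s | G⟧) ω ∂P = P.real (s ∩ B) := by
  rw [setIntegral_condExp hG ((integrable_const (1 : ℝ)).indicator hs) hB,
    integral_indicator hs, Measure.restrict_restrict hs, setIntegral_const, smul_eq_mul, mul_one]

variable [StandardBorelSpace Ω] {hG : G ≤ mΩ} {β β' : Type*} [MeasurableSpace β]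
  [MeasurableSpace β'] {f : Ω → β} {g : Ω → β'}

lemma ProbabilityTheory.CondIndepFun.measureReal_inter_le (hf : Measurable f)
    (hg : Measurable g) (hind : CondIndepFun G hG f g P) {I : Set β} {J : Set β'}
    (hI : MeasurableSet I) (hJ : MeasurableSet J) {B : Set Ω} (hB : MeasurableSet[G] B) {K : ℝ}
    (hK : 0 ≤ K) (hbd : ∀ᵐ ω ∂P, ω ∈ B → (P⟦g ⁻¹' J | G⟧) ω ≤ K) :
    P.real (f ⁻¹' I ∩ g ⁻¹' J ∩ B) ≤ K * P.real (f ⁻¹' I) := by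
  have hfI : MeasurableSet (f ⁻¹' I) := hf hI
  have hnonneg : ∀ s : Set Ω, 0 ≤ᵐ[P] P⟦s | G⟧ := fun s =>
    condExp_nonneg (.of_forall fun ω => indicator_nonneg (fun _ _ => zero_le_one) ω)
  have hprod := (condIndepFun_iff_condExp_inter_preimage_eq_mul hf hg).1 hind I J hI hJ
  calc P.real (f ⁻¹' I ∩ g ⁻¹' J ∩ B)
      = ∫ ω in B, (P⟦f ⁻¹' I | G⟧) ω * (P⟦g ⁻¹' J | G⟧) ω ∂P := by
        rw [← setIntegral_condExp_indicator hG (hfI.inter (hg hJ)) hB]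
        exact setIntegral_congr_ae (hG _ hB) (hprod.mono fun ω hω _ => hω)
    _ ≤ ∫ ω in B, K * (P⟦f ⁻¹' I | G⟧) ω ∂P := by
        refine integral_mono_of_nonneg ?_ (integrable_condExp.const_mul K).integrableOn ?_
        · filter_upwards [ae_restrict_of_ae (hnonneg (f ⁻¹' I)),
            ae_restrict_of_ae (hnonneg (g ⁻¹' J))] with ω h₁ h₂
          exact mul_nonneg h₁ h₂
        · rw [EventuallyLE, ae_restrict_iff' (hG _ hB)]
          filter_upwards [hnonneg (f ⁻¹' I), hbd] with ω h₀ hω hωB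
          rw [mul_comm K]
          exact mul_le_mul_of_nonneg_left (hω hωB) h₀
    _ ≤ K * ∫ ω, (P⟦f ⁻¹' I | G⟧) ω ∂P := by
        rw [integral_const_mul]
        exact mul_le_mul_of_nonneg_left
          (setIntegral_le_integral integrable_condExp (hnonneg _)) hK
    _ = K * P.real (f ⁻¹' I) := by
        rw [integral_condExp hG, integral_indicator hfI, setIntegral_const, smul_eq_mul, mul_one]

end CondIndep

lemma sum_range_mul_sub_succ_le {a N f : ℕ → ℝ} {A : ℝ} (ha₀ : 0 ≤ a 0) (ha : Monotone a)
    (hN : ∀ j, 0 ≤ N j) (hNf : ∀ j, N j ≤ A * f j) (m : ℕ) :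
    ∑ j ∈ Finset.range m, a j * (N j - N (j + 1))
      ≤ A * (∑ j ∈ Finset.range m, a j * (f j - f (j + 1)) + a m * f m) := by
  have key : ∀ m, ∑ j ∈ Finset.range m, a j * (N j - N (j + 1))
      ≤ A * (∑ j ∈ Finset.range m, a j * (f j - f (j + 1)) + a m * f m) - a m * N m := by
    intro m
    induction m with
    | zero => simpa [mul_left_comm A] using mul_le_mul_of_nonneg_left (hNf 0) ha₀
    | succ m ih =>
      simp only [Finset.sum_range_succ]
      nlinarith [hNf (m + 1), hN (m + 1), ha m.le_succ]
  linarith [key m, mul_nonneg (ha₀.trans (ha m.zero_le)) (hN m)]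

lemma exists_grid_of_le {a b : ℝ} (hab : a ≤ b) :
    ∃ (s : ℕ → ℝ) (m : ℕ), Monotone s ∧ s 0 = a ∧ (∀ j, m ≤ j → s j = b) ∧
      (∀ j, a ≤ s j ∧ s j ≤ b) ∧ ∀ j, s (j + 1) ≤ s j + 1 := by
  obtain ⟨m, hm⟩ := exists_nat_ge (b - a)
  refine ⟨fun j => min (a + j) b, m, fun i j hij => min_le_min_right _ (by gcongr),
    by simp [hab], fun j hj => min_eq_right (by linarith [(Nat.cast_le (α := ℝ)).2 hj]),
    fun j => ⟨le_min (by simp) hab, min_le_right _ _⟩, fun j => ?_⟩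
  simp only [Nat.cast_succ, ← min_add_add_right]
  exact min_le_min (by linarith) (by linarith)

lemma measureReal_lt_add_le_grid {Ω : Type*} [MeasurableSpace Ω] {P : Measure Ω}
    [IsFiniteMeasure P] (S Y : Ω → ℝ) (B : Set Ω) {s : ℕ → ℝ} (hs : Monotone s) {z c : ℝ}
    {m : ℕ} (hs₀ : s 0 = z - c) (hsm : s m = c) :
    P.real {ω | z < S ω + Y ω} ≤ P.real (S ⁻¹' Ioi c) + P.real (Y ⁻¹' Ioi c) + P.real Bᶜ
      + ∑ j ∈ Finset.range m,
        P.real (S ⁻¹' Ioc (s j) (s (j + 1)) ∩ Y ⁻¹' Ioi (z - s (j + 1)) ∩ B) := by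
  have hsub : {ω | z < S ω + Y ω} ⊆ S ⁻¹' Ioi c ∪ Y ⁻¹' Ioi c ∪ Bᶜ ∪
      ⋃ j ∈ Finset.range m, S ⁻¹' Ioc (s j) (s (j + 1)) ∩ Y ⁻¹' Ioi (z - s (j + 1)) ∩ B := by
    intro ω (hω : z < S ω + Y ω)
    by_cases hS : c < S ω
    · exact .inl (.inl (.inl hS))
    by_cases hY : c < Y ω
    · exact .inl (.inl (.inr hY))
    by_cases hB : ω ∈ B
    swap
    · exact .inl (.inr hB)
    have hSmem : S ω ∈ ⋃ j ∈ Ico 0 m, Ioc (s j) (s (Order.succ j)) := by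
      rw [hs.biUnion_Ico_Ioc_map_succ, hs₀, hsm]
      exact ⟨by linarith [not_lt.1 hY], not_lt.1 hS⟩
    simp only [mem_iUnion, Order.succ_eq_add_one, exists_prop] at hSmem
    obtain ⟨j, hj, hSj⟩ := hSmem
    refine .inr (mem_biUnion (Finset.mem_range.2 hj.2) ⟨⟨hSj, ?_⟩, hB⟩)
    simp only [mem_preimage, mem_Ioi]
    linarith [hSj.2, not_lt.1 hY]
  refine (measureReal_mono hsub).trans ?_
  grw [measureReal_union_le, measureReal_union_le, measureReal_union_le,
    measureReal_biUnion_finset_le]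

lemma sum_tail_mul_sub_le_integral {μ : Measure ℝ} [IsFiniteMeasure μ] {s : ℕ → ℝ}
    (hs : Monotone s) (hstep : ∀ j, s (j + 1) ≤ s j + 1) {z : ℝ}
    (hone : ∀ j, tail μ (z - s j - 1) ≤ 2 * tail μ (z - s j)) (m : ℕ) :
    ∑ j ∈ Finset.range m, tail μ (z - s (j + 1)) * (tail μ (s j) - tail μ (s (j + 1)))
      ≤ 2 * ∫ y in s 0..s m, tail μ (z - y) ∂μ := by
  have hint : Integrable (fun y => tail μ (z - y)) μ :=
    .of_bound
      (tail_antitone.measurable.comp (measurable_const.sub measurable_id)).aestronglyMeasurable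
      (μ.real univ) (.of_forall fun y => by
        rw [Real.norm_of_nonneg (tail_nonneg _)]
        exact measureReal_mono (subset_univ _))
  rw [← intervalIntegral.sum_integral_adjacent_intervals fun _ _ => hint.intervalIntegrable,
    Finset.mul_sum]
  refine Finset.sum_le_sum fun j _ => ?_
  rw [tail_sub_tail (hs j.le_succ), intervalIntegral.integral_of_le (hs j.le_succ),
    ← integral_const_mul, mul_comm, ← smul_eq_mul, ← setIntegral_const]
  refine setIntegral_mono_on integrableOn_const (hint.const_mul 2).integrableOn measurableSet_Ioc
    fun y hy => ?_
  calc tail μ (z - s (j + 1)) ≤ tail μ (z - s j - 1) := tail_antitone (by linarith [hstep j])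
    _ ≤ 2 * tail μ (z - s j) := hone j
    _ ≤ 2 * tail μ (z - y) := by gcongr; exact tail_antitone (by linarith [hy.1])

lemma measureReal_lt_add_le_of_condIndepFun {Ω : Type*} {G : MeasurableSpace Ω}
    [mΩ : MeasurableSpace Ω] [StandardBorelSpace Ω] {hG : G ≤ mΩ} {P : Measure Ω}
    [IsFiniteMeasure P] {μ : Measure ℝ} [IsFiniteMeasure μ] {S Y : Ω → ℝ} (hS : Measurable S)
    (hY : Measurable Y) (hind : CondIndepFun G hG S Y P) (hYμ : P.map Y = μ)
    {A : ℝ} (hA : 0 ≤ A) (hSA : ∀ w, P.real (S ⁻¹' Ioi w) ≤ A * tail μ w)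
    {z t : ℝ} (ht : 0 ≤ t) (htz : t ≤ z - t)
    (hone : ∀ x, t ≤ x → tail μ (x - 1) ≤ 2 * tail μ x)
    {B : Set Ω} (hB : MeasurableSet[G] B) {R : ℝ} (hR : 0 ≤ R)
    (hcond : ∀ y, t ≤ y → y ≤ z → ∀ᵐ ω ∂P, ω ∈ B → (P⟦Y ⁻¹' Ioi y | G⟧) ω ≤ R * tail μ y) :
    P.real {ω | z < S ω + Y ω} ≤ (A + 1) * tail μ (z - t) + P.real Bᶜ
      + R * A * (2 * ∫ y in Ioc t (z - t), tail μ (z - y) ∂μ + tail μ t * tail μ (z - t)) := by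
  obtain ⟨s, m, hs, hs₀, hs_top, hs_mem, hstep⟩ := exists_grid_of_le htz
  set N : ℕ → ℝ := fun j => P.real (S ⁻¹' Ioi (s j))
  have hcell : ∀ j, P.real (S ⁻¹' Ioc (s j) (s (j + 1)) ∩ Y ⁻¹' Ioi (z - s (j + 1)) ∩ B)
      ≤ R * (tail μ (z - s (j + 1)) * (N j - N (j + 1))) := fun j => by
    rw [← measureReal_preimage_Ioc hS (hs j.le_succ), ← mul_assoc]
    refine hind.measureReal_inter_le hS hY measurableSet_Ioc measurableSet_Ioi hB
      (mul_nonneg hR (tail_nonneg _)) ?_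
    filter_upwards [hcond (z - s (j + 1)) (by linarith [hs_mem (j + 1)])
      (by linarith [hs_mem (j + 1)])] with ω hω hωB using hω hωB
  have habel := sum_range_mul_sub_succ_le (a := fun j => tail μ (z - s (j + 1))) (N := N)
    (f := fun j => tail μ (s j)) (tail_nonneg _)
    (fun i j hij => tail_antitone (by linarith [hs (Nat.succ_le_succ hij)]))
    (fun _ => measureReal_nonneg) (fun j => hSA (s j)) m
  have hgrid := sum_tail_mul_sub_le_integral hs hstep
    (fun j => hone (z - s j) (by linarith [hs_mem j])) m
  rw [hs₀, hs_top m le_rfl, intervalIntegral.integral_of_le htz] at hgrid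
  have hY_tail : P.real (Y ⁻¹' Ioi (z - t)) = tail μ (z - t) := by
    rw [tail, ← hYμ, ← map_measureReal_apply hY measurableSet_Ioi]
    rfl
  have ha_top : tail μ (z - s (m + 1)) = tail μ t := by rw [hs_top _ m.le_succ, sub_sub_cancel]
  calc P.real {ω | z < S ω + Y ω}
      ≤ _ := measureReal_lt_add_le_grid S Y B hs (by rw [hs₀]; ring) (hs_top m le_rfl)
    _ ≤ A * tail μ (z - t) + tail μ (z - t) + P.real Bᶜ
        + R * ∑ j ∈ Finset.range m, tail μ (z - s (j + 1)) * (N j - N (j + 1)) := by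
        rw [hY_tail, Finset.mul_sum]
        gcongr with j
        · exact hSA _
        · exact hcell j
    _ ≤ A * tail μ (z - t) + tail μ (z - t) + P.real Bᶜ
        + R * (A * (2 * ∫ y in Ioc t (z - t), tail μ (z - y) ∂μ
          + tail μ t * tail μ (z - t))) := by
        gcongr
        refine habel.trans ?_
        simp only [ha_top, hs_top m le_rfl]
        gcongr
    _ = _ := by ring

section Insensitivity

variable {μ : Measure ℝ} {h : ℝ → ℝ}

lemma MemH.eventually_tail_sub_le (hH : MemH μ h) (hpos : ∀ x, 0 < tail μ x) {c : ℝ}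
    (hc : 1 < c) : ∀ᶠ x in atTop, tail μ (x - h x) ≤ c * tail μ x := by
  filter_upwards [hH.tail_insensitive.eventually_lt_const hc] with x hx
  exact ((div_lt_iff₀ (hpos x)).1 hx).le

lemma MemH.eventually_tail_sub_one_le [IsFiniteMeasure μ] (hH : MemH μ h)
    (hpos : ∀ x, 0 < tail μ x) : ∀ᶠ x in atTop, tail μ (x - 1) ≤ 2 * tail μ x := by
  filter_upwards [hH.eventually_tail_sub_le hpos one_lt_two,
    hH.tendsto_atTop.eventually_ge_atTop 1] with x hx h1
  exact (tail_antitone (by linarith)).trans hx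

lemma MemH.eventually_le_sub (hH : MemH μ h) : ∀ᶠ x in atTop, h x ≤ x - h x := by
  filter_upwards [hH.ratio_zero.eventually_lt_const one_half_pos, eventually_gt_atTop 0]
    with x hx hx₀
  rw [div_lt_iff₀ hx₀] at hx
  linarith

end Insensitivity

lemma max_zero_mul_le {r a c : ℝ} (ha : 0 ≤ a) (hc : 0 ≤ c) (h : r * a ≤ c) :
    max r 0 * a ≤ c := by
  rw [max_mul_of_nonneg _ _ ha, zero_mul]
  exact max_le h hc

lemma AssumptionD3.eventually_measureReal_lt_sum_range_succ_le {Ω : Type*}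
    {G : MeasurableSpace Ω} [mΩ : MeasurableSpace Ω] [StandardBorelSpace Ω] {hG : G ≤ mΩ}
    {P : Measure Ω} [IsFiniteMeasure P] {μ : Measure ℝ} [IsFiniteMeasure μ] {X : ℕ → Ω → ℝ}
    {h : ℝ → ℝ} (hD3 : AssumptionD3 P G X μ h) (hH : MemH μ h) (hpos : ∀ x, 0 < tail μ x)
    (hX : ∀ k, Measurable (X k)) (hind : iCondIndepFun G hG X P)
    (hlaw : ∀ k, P.map (X k) = μ) {ε : ℝ} (hε : 0 < ε) :
    ∀ᶠ z in atTop, ∀ n A, 0 ≤ A →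
      (∀ w, P.real {ω | w < ∑ k ∈ Finset.range n, X k ω} ≤ A * tail μ w) →
      P.real {ω | z < ∑ k ∈ Finset.range (n + 1), X k ω} ≤ ((1 + ε) * A + 3) * tail μ z := by
  obtain ⟨r, B, hr, hBG, hBmono, -, hbound, hBsmall, hrF, hrJ⟩ := hD3
  set δ := min (ε / 5) 1
  have hδ : 0 < δ := lt_min (by positivity) one_pos
  have hδ₁ : δ ≤ 1 := min_le_right _ _
  have hδε : 5 * δ ≤ ε := by linarith [min_le_left (ε / 5) 1]
  obtain ⟨z₁, hz₁⟩ := eventually_atTop.1 (hH.eventually_tail_sub_one_le hpos)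
  filter_upwards [hH.eventually_tail_sub_le hpos (lt_add_of_pos_right 1 hδ), hBsmall δ hδ,
    hrF.eventually_le_const hδ, hrJ.eventually_le_const hδ, hH.eventually_le_sub,
    hH.tendsto_atTop.eventually_ge_atTop (max z₁ 0)]
    with z hz_tail hzB hzrF hzrJ hz_sub hz_h
  intro n A hA hSA
  set F := tail μ z
  set J := ∫ y in Ioc (h z) (z - h z), tail μ (z - y) ∂μ
  set R := max (r z) 0
  have hF : 0 ≤ F := tail_nonneg z
  have hJ : 0 ≤ J := setIntegral_nonneg measurableSet_Ioc fun _ _ => tail_nonneg _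
  have hRF : R * tail μ (h z) ≤ δ := max_zero_mul_le (tail_nonneg _) hδ.le hzrF
  have hRJ : R * J ≤ δ * F :=
    max_zero_mul_le hJ (mul_nonneg hδ.le hF) (by rwa [div_le_iff₀ (hpos z)] at hzrJ)
  have hsum : ∑ k ∈ Finset.range n, X k = fun ω => ∑ k ∈ Finset.range n, X k ω := by
    ext ω
    exact Finset.sum_apply ω _ X
  have hstep := measureReal_lt_add_le_of_condIndepFun (Finset.measurable_sum _ fun k _ => hX k)
    (hX n) (hsum ▸ hind.condIndepFun_sum_range_succ hX n) (hlaw n) hA hSA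
    (le_trans (le_max_right _ _) hz_h) hz_sub
    (fun x hx => hz₁ x (by linarith [le_max_left z₁ 0])) (hBG n (h z)) (le_max_right _ _)
    (fun y hy hyz => by
      filter_upwards [hbound n y] with ω hω hωB
      exact (hω (hBmono n hy hωB)).trans
        (mul_le_mul_of_nonneg_right ((hr hyz).trans (le_max_left _ _)) (tail_nonneg _)))
  simp only [Finset.sum_range_succ]
  calc P.real {ω | z < ∑ k ∈ Finset.range n, X k ω + X n ω}
      ≤ (A + 1) * tail μ (z - h z) + P.real (B n (h z))ᶜ
        + A * (2 * (R * J) + R * tail μ (h z) * tail μ (z - h z)) := hstep.trans_eq (by ring)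
    _ ≤ (A + 1) * ((1 + δ) * F) + δ * F + A * (2 * (δ * F) + δ * ((1 + δ) * F)) := by
        gcongr
        · exact hzB n
        · exact tail_nonneg _
    _ ≤ ((1 + ε) * A + 3) * F := by
        have hAF : 0 ≤ A * F := mul_nonneg hA hF
        nlinarith [mul_nonneg hAF (sub_nonneg.2 hδε), mul_nonneg hF (sub_nonneg.2 hδ₁),
          mul_nonneg (mul_nonneg hAF hδ.le) (sub_nonneg.2 hδ₁)]

/-- `Aₙ = V (1 + ε)ⁿ - C / ε` solves `Aₙ₊₁ = (1 + ε) Aₙ + C` with `A₀ = 1 / q x₀`, where `x₀` is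
the threshold of the one-step bound; below `x₀` the trivial bound `p ≤ 1 ≤ q / q x₀` is used. -/
lemma exists_le_mul_pow_of_eventually_step {p : ℕ → ℝ → ℝ} {q : ℝ → ℝ} {ε C : ℝ}
    (hε : 0 < ε) (hC : 0 ≤ C) (hq : Antitone q) (hq_pos : ∀ x, 0 < q x)
    (hp_le : ∀ n x, p n x ≤ 1) (hp₀ : ∀ᶠ x in atTop, p 0 x ≤ 0)
    (hstep : ∀ᶠ x in atTop, ∀ n A, 0 ≤ A → (∀ w, p n w ≤ A * q w) →
      p (n + 1) x ≤ ((1 + ε) * A + C) * q x) :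
    ∃ V, 0 < V ∧ ∀ n x, p n x ≤ V * (1 + ε) ^ n * q x := by
  obtain ⟨x₀, hx₀⟩ := eventually_atTop.1 (hp₀.and hstep)
  set c := 1 / q x₀
  have hc : 0 < c := one_div_pos.2 (hq_pos x₀)
  set V := c + C / ε
  set A : ℕ → ℝ := fun n => V * (1 + ε) ^ n - C / ε
  have hA_ge : ∀ n, c ≤ A n := fun n => by
    have : V ≤ V * (1 + ε) ^ n :=
      le_mul_of_one_le_right (by positivity) (one_le_pow₀ (by linarith))
    simp only [A, V] at this ⊢
    linarith
  have hA_succ : ∀ n, A (n + 1) = (1 + ε) * A n + C := fun n => by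
    simp only [A]
    field_simp
    ring
  have htrivial : ∀ n x, x < x₀ → p n x ≤ A n * q x := fun n x hx =>
    calc p n x ≤ c * q x₀ := by rw [one_div_mul_cancel (hq_pos x₀).ne']; exact hp_le n x
      _ ≤ A n * q x := mul_le_mul (hA_ge n) (hq hx.le) (hq_pos x₀).le (hc.trans_le (hA_ge n)).le
  have hbound : ∀ n x, p n x ≤ A n * q x := by
    intro n
    induction n with
    | zero =>
      intro x
      rcases lt_or_ge x x₀ with hx | hx
      · exact htrivial 0 x hx
      · exact (hx₀ x hx).1.trans (mul_nonneg (hc.trans_le (hA_ge 0)).le (hq_pos x).le)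
    | succ n ih =>
      intro x
      rcases lt_or_ge x x₀ with hx | hx
      · exact htrivial (n + 1) x hx
      · rw [hA_succ]
        exact (hx₀ x hx).2 n (A n) (hc.trans_le (hA_ge n)).le ih
  refine ⟨V, by positivity, fun n x => (hbound n x).trans ?_⟩
  gcongr
  · exact (hq_pos x).le
  · exact sub_le_self _ (by positivity)

/-- Kesten-type bound for conditionally independent random variables with common
subexponential distribution satisfying Assumption D3. -/
theorem kesten_bound
    {Ω : Type*} (G : MeasurableSpace Ω) [mΩ : MeasurableSpace Ω] [StandardBorelSpace Ω]
    (P : MeasureTheory.Measure Ω) [MeasureTheory.IsProbabilityMeasure P]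
    (hG : G ≤ mΩ)
    (μ : MeasureTheory.Measure ℝ) [MeasureTheory.IsProbabilityMeasure μ]
    (hS : Subexponential μ)
    (X : ℕ → Ω → ℝ) (hXmeas : ∀ k, Measurable (X k))
    (hD1 : ProbabilityTheory.iCondIndepFun (mΩ := mΩ) G hG X P)
    (hdist : ∀ k, MeasureTheory.Measure.map (X k) P = μ)
    (h : ℝ → ℝ) (hmemH : MemH μ h) (hD3 : AssumptionD3 P G X μ h) :
    ∀ ε : ℝ, 0 < ε → ∃ V : ℝ, 0 < V ∧ ∃ x₀ : ℝ, ∀ x > x₀, ∀ n : ℕ, 1 ≤ n →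
      (P {ω | x < ∑ k ∈ Finset.range n, X k ω}).toReal
        ≤ V * (1 + ε) ^ n * tail μ x := by
  intro ε hε
  obtain ⟨V, hV, hbound⟩ := exists_le_mul_pow_of_eventually_step
    (p := fun n x => P.real {ω | x < ∑ k ∈ Finset.range n, X k ω}) hε zero_le_three
    tail_antitone hS.tail_pos (fun _ _ => measureReal_le_one)
    (by filter_upwards [eventually_ge_atTop 0] with x hx; simp [not_lt.2 hx])
    (hD3.eventually_measureReal_lt_sum_range_succ_le hmemH hS.tail_pos hXmeas hD1 hdist hε)
  exact ⟨V, hV, 0, fun x _ n _ => hbound n x⟩
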